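/- arXiv:1912.11864 — 5 statements merged into one kernel-verified Lean document; each statement's English description precedes it below -/
import Mathlib

section
/- Let k ≥ 1 and let φ be a nondegenerate monotone Boolean function on V = {0,...,k}. Then eul(φ) = μ_CNF(0̂, 1̂) = (-1)^k · μ_DNF(0̂, 1̂), where μ_CNF (resp. μ_DNF) is the Möbius function of the CNF lattice L_CNF^φ (resp. DNF lattice L_DNF^φ) of φ, 0̂ = V is the least element and 1̂ = ∅ is the greatest element of these lattices. -/
/-!
A valuation satisfies a monotone `φ` iff it meets every prime implicate, so inclusion–exclusion
over the prime implicates gives `eul φ = ∑ (-1)^|s|`, summed over the families `s` of prime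
implicates whose union is `V`. The same alternating sum is the Möbius function `μ(V, ∅)` of any
lattice of unions of nonempty sets, which gives the CNF identity. The DNF identity is the CNF one
for the dual function `ν ↦ ¬φ(V \ ν)`: its prime implicates are the prime implicants of `φ`, and
complementing valuations shows that its Euler characteristic is `(-1)^k eul φ`.
-/
open scoped Classical

/-- Flip the membership of variable `l` in valuation `ν`. -/
def flipV {k : ℕ} (ν : Finset (Fin (k + 1))) (l : Fin (k + 1)) : Finset (Fin (k + 1)) :=
  if l ∈ ν then ν.erase l else insert l ν

/-- The set of satisfying valuations of a Boolean function on `V = {0,...,k}`. -/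
def satSet {k : ℕ} (φ : Finset (Fin (k + 1)) → Bool) : Finset (Finset (Fin (k + 1))) :=
  Finset.univ.filter (fun ν => φ ν = true)

/-- The Euler characteristic of a Boolean function: `Σ_{ν ⊨ φ} (-1)^{|ν|}`. -/
def eul {k : ℕ} (φ : Finset (Fin (k + 1)) → Bool) : ℤ :=
  ∑ ν ∈ satSet φ, (-1 : ℤ) ^ ν.card

/-- A Boolean function is monotone if enlarging a satisfying valuation keeps it satisfying. -/
def MonotoneBF {k : ℕ} (φ : Finset (Fin (k + 1)) → Bool) : Prop :=
  ∀ ν ν' : Finset (Fin (k + 1)), ν ⊆ ν' → φ ν = true → φ ν' = true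

/-- A Boolean function is nondegenerate if it depends on every variable of `V`. -/
def Nondegenerate (k : ℕ) (φ : Finset (Fin (k + 1)) → Bool) : Prop :=
  ∀ l : Fin (k + 1), ∃ ν, φ ν ≠ φ (flipV ν l)

/-- `C` is an implicate of `φ`: every satisfying valuation of `φ` intersects `C`. -/
def IsImplicate {k : ℕ} (φ : Finset (Fin (k + 1)) → Bool) (C : Finset (Fin (k + 1))) : Prop :=
  ∀ ν, φ ν = true → (ν ∩ C).Nonempty

/-- `C` is a prime implicate of `φ`: a minimal implicate. For a nondegenerate monotone
function these are the clauses `C_0, ..., C_n` of its unique minimized CNF. -/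
def IsPrimeImplicate {k : ℕ} (φ : Finset (Fin (k + 1)) → Bool)
    (C : Finset (Fin (k + 1))) : Prop :=
  IsImplicate φ C ∧ ∀ C', C' ⊂ C → ¬ IsImplicate φ C'

/-- `C` is a prime implicant of `φ`: a minimal satisfying valuation. For a nondegenerate
monotone function these are the clauses of its unique minimized DNF. -/
def IsPrimeImplicant {k : ℕ} (φ : Finset (Fin (k + 1)) → Bool)
    (C : Finset (Fin (k + 1))) : Prop :=
  φ C = true ∧ ∀ C', C' ⊂ C → φ C' = false

/-- The elements of the CNF lattice `L_CNF^φ`: the unions `d_s = ⋃_{i ∈ s} C_i` of sets of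
prime implicates of `φ`, ordered by reverse set inclusion. Its greatest element `1̂` is `∅`. -/
noncomputable def cnfLattice {k : ℕ} (φ : Finset (Fin (k + 1)) → Bool) :
    Finset (Finset (Fin (k + 1))) :=
  Finset.univ.filter (fun d => ∃ S : Finset (Finset (Fin (k + 1))),
    (∀ C ∈ S, IsPrimeImplicate φ C) ∧ d = S.sup id)

/-- The elements of the DNF lattice `L_DNF^φ`: the unions of sets of prime implicants of `φ`,
ordered by reverse set inclusion. Its greatest element `1̂` is `∅`. -/
noncomputable def dnfLattice {k : ℕ} (φ : Finset (Fin (k + 1)) → Bool) :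
    Finset (Finset (Fin (k + 1))) :=
  Finset.univ.filter (fun d => ∃ S : Finset (Finset (Fin (k + 1))),
    (∀ C ∈ S, IsPrimeImplicant φ C) ∧ d = S.sup id)

/-- The Möbius function of the poset whose elements are the members of `L`, ordered by
reverse set inclusion: `mobiusRev L v u = μ(u, v)` for `u ≤ v` (i.e. `v ⊆ u`), defined by
`μ(u,u) = 1` and `μ(u,v) = -∑_{u < w ≤ v} μ(w,v)`, the sum ranging over the elements `w`
of `L` with `u < w ≤ v` (i.e. `v ⊆ w ⊊ u`). -/
noncomputable def mobiusRev {k : ℕ} (L : Finset (Finset (Fin (k + 1))))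
    (v : Finset (Fin (k + 1))) (u : Finset (Fin (k + 1))) : ℤ :=
  if u = v then 1
  else - ∑ w ∈ (L.filter (fun w => v ⊆ w ∧ w ⊂ u)).attach, mobiusRev L v w.1
termination_by u.card
decreasing_by
  have hw := w.2
  simp only [Finset.mem_filter] at hw
  exact Finset.card_lt_card hw.2.2

open Finset

section AlternatingSums

variable {α : Type*} [DecidableEq α]

theorem sum_neg_one_pow_card_filter_sup_subset (𝒞 : Finset (Finset α)) (u : Finset α) :
    ∑ s ∈ 𝒞.powerset with s.sup id ⊆ u, (-1 : ℤ) ^ #s = if ∀ C ∈ 𝒞, ¬C ⊆ u then 1 else 0 := by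
  have : {s ∈ 𝒞.powerset | s.sup id ⊆ u} = {C ∈ 𝒞 | C ⊆ u}.powerset := by
    ext s
    simp only [mem_filter, mem_powerset, Finset.sup_le_iff, id, subset_iff (s₁ := s)]
    grind
  simp only [this, sum_powerset_neg_one_pow_card, filter_eq_empty_iff]

variable [Fintype α]

theorem sum_neg_one_pow_card_filter_subset_compl (A : Finset α) :
    ∑ ν with A ⊆ νᶜ, (-1 : ℤ) ^ #ν = if A = univ then 1 else 0 := by
  have : ({ν | A ⊆ νᶜ} : Finset (Finset α)) = Aᶜ.powerset := by
    ext ν; simp [subset_compl_comm (s := A)]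
  simp only [this, sum_powerset_neg_one_pow_card, compl_eq_empty_iff]

theorem sum_neg_one_pow_card_hittingSets (𝒞 : Finset (Finset α)) :
    ∑ ν with ∀ C ∈ 𝒞, (ν ∩ C).Nonempty, (-1 : ℤ) ^ #ν
      = ∑ s ∈ 𝒞.powerset with s.sup id = univ, (-1 : ℤ) ^ #s := by
  have hit (ν : Finset α) : (if ∀ C ∈ 𝒞, (ν ∩ C).Nonempty then (1 : ℤ) else 0)
      = ∑ s ∈ 𝒞.powerset with s.sup id ⊆ νᶜ, (-1 : ℤ) ^ #s := by
    rw [sum_neg_one_pow_card_filter_sup_subset]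
    simp only [subset_compl_iff_disjoint_left, not_disjoint_iff_nonempty_inter]
  calc ∑ ν with ∀ C ∈ 𝒞, (ν ∩ C).Nonempty, (-1 : ℤ) ^ #ν
      = ∑ ν, ∑ s ∈ 𝒞.powerset with s.sup id ⊆ νᶜ, (-1 : ℤ) ^ #s * (-1) ^ #ν := by
        simp only [sum_filter, ← sum_mul, ← hit, ite_mul, one_mul, zero_mul]
    _ = ∑ s ∈ 𝒞.powerset, ∑ ν with s.sup id ⊆ νᶜ, (-1 : ℤ) ^ #s * (-1) ^ #ν := by
        simp only [sum_filter]; exact sum_comm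
    _ = ∑ s ∈ 𝒞.powerset with s.sup id = univ, (-1 : ℤ) ^ #s := by
        rw [sum_filter]
        refine sum_congr rfl fun s _ => ?_
        rw [← mul_sum, sum_neg_one_pow_card_filter_subset_compl, mul_ite, mul_one, mul_zero]

end AlternatingSums

section UnionClosure

variable {α : Type*} [DecidableEq α]

def unionClosure (𝒞 : Finset (Finset α)) : Finset (Finset α) :=
  𝒞.powerset.image fun s => s.sup id

theorem mem_unionClosure {𝒞 : Finset (Finset α)} {d : Finset α} :
    d ∈ unionClosure 𝒞 ↔ ∃ s ⊆ 𝒞, s.sup id = d := by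
  simp [unionClosure]

theorem eq_empty_or_exists_subset_of_mem_unionClosure {𝒞 : Finset (Finset α)} {d : Finset α}
    (hd : d ∈ unionClosure 𝒞) : d = ∅ ∨ ∃ C ∈ 𝒞, C ⊆ d := by
  obtain ⟨s, hs𝒞, rfl⟩ := mem_unionClosure.1 hd
  rcases s.eq_empty_or_nonempty with rfl | ⟨C, hC⟩
  · exact Or.inl sup_empty
  · exact Or.inr ⟨C, hs𝒞 hC, le_sup (f := id) hC⟩

theorem sum_unionClosure_sum_filter_sup_eq {M : Type*} [AddCommMonoid M] (𝒞 : Finset (Finset α))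
    (p : Finset α → Prop) [DecidablePred p] (f : Finset (Finset α) → M) :
    ∑ w ∈ unionClosure 𝒞 with p w, ∑ s ∈ 𝒞.powerset with s.sup id = w, f s
      = ∑ s ∈ 𝒞.powerset with p (s.sup id), f s := by
  rw [sum_comm' (t' := 𝒞.powerset.filter fun s => p (s.sup id)) (s' := fun s => {s.sup id})]
  · simp only [sum_singleton]
  · simp only [mem_unionClosure, mem_filter, mem_powerset, mem_singleton]
    grind

end UnionClosure

theorem mobiusRev_unionClosure {k : ℕ} {𝒞 : Finset (Finset (Fin (k + 1)))} (h₀ : ∅ ∉ 𝒞)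
    (u : Finset (Fin (k + 1))) (hu : u = ∅ ∨ ∃ C ∈ 𝒞, C ⊆ u) :
    mobiusRev (unionClosure 𝒞) ∅ u = ∑ s ∈ 𝒞.powerset with s.sup id = u, (-1 : ℤ) ^ #s := by
  induction u using Finset.strongInduction with
  | H u ih =>
  rw [mobiusRev]
  split_ifs with hu₀
  · subst hu₀
    have hempty := sum_neg_one_pow_card_filter_sup_subset 𝒞 ∅
    simp only [subset_empty] at hempty
    rw [hempty, if_pos fun C hC (hC₀ : C = ∅) => h₀ (hC₀ ▸ hC)]
  obtain ⟨C, hC, hCu⟩ := hu.resolve_left hu₀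
  have below : ∀ w ∈ (unionClosure 𝒞).filter (fun w => ∅ ⊆ w ∧ w ⊂ u),
      mobiusRev (unionClosure 𝒞) ∅ w = ∑ s ∈ 𝒞.powerset with s.sup id = w, (-1 : ℤ) ^ #s :=
    fun w hw => ih w (mem_filter.1 hw).2.2
      (eq_empty_or_exists_subset_of_mem_unionClosure (mem_filter.1 hw).1)
  have split : ∑ s ∈ 𝒞.powerset with s.sup id ⊆ u, (-1 : ℤ) ^ #s
      = ∑ s ∈ 𝒞.powerset with ∅ ⊆ s.sup id ∧ s.sup id ⊂ u, (-1 : ℤ) ^ #s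
        + ∑ s ∈ 𝒞.powerset with s.sup id = u, (-1 : ℤ) ^ #s := by
    simp only [sum_filter, ← sum_add_distrib]
    refine sum_congr rfl fun s _ => ?_
    by_cases heq : s.sup id = u
    · simp [heq]
    · simp [heq, Finset.ssubset_iff_subset_ne]
  rw [sum_neg_one_pow_card_filter_sup_subset, if_neg fun h => h C hC hCu] at split
  rw [sum_attach _ fun w => mobiusRev (unionClosure 𝒞) ∅ w, sum_congr rfl below,
    sum_unionClosure_sum_filter_sup_eq]
  linarith

section BooleanFunctions

variable {k : ℕ} {φ : Finset (Fin (k + 1)) → Bool}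

noncomputable def primeImplicates (φ : Finset (Fin (k + 1)) → Bool) :
    Finset (Finset (Fin (k + 1))) :=
  univ.filter (IsPrimeImplicate φ)

theorem cnfLattice_eq_unionClosure : cnfLattice φ = unionClosure (primeImplicates φ) := by
  ext d
  simp only [cnfLattice, primeImplicates, mem_unionClosure, mem_filter, mem_univ, true_and,
    subset_iff]
  grind

theorem IsImplicate.exists_isPrimeImplicate_subset {D : Finset (Fin (k + 1))}
    (hD : IsImplicate φ D) : ∃ C ⊆ D, IsPrimeImplicate φ C := by
  obtain ⟨C, hCD, hC⟩ := exists_minimal_le_of_wellFoundedLT _ D hD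
  exact ⟨C, hCD, minimal_iff_forall_lt.1 hC⟩

theorem MonotoneBF.apply_eq_true_iff (hmono : MonotoneBF φ) (ν : Finset (Fin (k + 1))) :
    φ ν = true ↔ ∀ C ∈ primeImplicates φ, (ν ∩ C).Nonempty := by
  refine ⟨fun hν C hC => (mem_filter.1 hC).2.1 ν hν, fun h => ?_⟩
  by_contra hν
  have hcompl : IsImplicate φ νᶜ := by
    intro μ hμ
    by_contra hμν
    rw [not_nonempty_iff_eq_empty, ← disjoint_iff_inter_eq_empty,
      ← subset_compl_iff_disjoint_right, compl_compl] at hμν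
    exact hν (hmono μ ν hμν hμ)
  obtain ⟨C, hCν, hC⟩ := hcompl.exists_isPrimeImplicate_subset
  obtain ⟨x, hx⟩ := h C (mem_filter.2 ⟨mem_univ C, hC⟩)
  exact mem_compl.1 (hCν (mem_inter.1 hx).2) (mem_inter.1 hx).1

theorem MonotoneBF.eul_eq_sum_primeImplicates (hmono : MonotoneBF φ) :
    eul φ = ∑ s ∈ (primeImplicates φ).powerset with s.sup id = univ, (-1 : ℤ) ^ #s := by
  rw [eul, satSet, ← sum_neg_one_pow_card_hittingSets]
  exact sum_congr (filter_congr fun ν _ => hmono.apply_eq_true_iff ν) fun _ _ => rfl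

theorem MonotoneBF.eul_eq_mobiusRev_cnfLattice (hmono : MonotoneBF φ) (h₀ : φ ∅ = false)
    (h₁ : φ univ = true) : eul φ = mobiusRev (cnfLattice φ) ∅ univ := by
  have hempty : ∅ ∉ primeImplicates φ := fun h => by
    simpa using (mem_filter.1 h).2.1 univ h₁
  have huniv : IsImplicate φ univ := fun ν hν => by
    rw [inter_univ, nonempty_iff_ne_empty]
    rintro rfl
    simp [h₀] at hν
  obtain ⟨C, -, hC⟩ := huniv.exists_isPrimeImplicate_subset
  rw [cnfLattice_eq_unionClosure, hmono.eul_eq_sum_primeImplicates,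
    mobiusRev_unionClosure hempty univ (Or.inr ⟨C, mem_filter.2 ⟨mem_univ C, hC⟩, subset_univ C⟩)]

def dualBF (φ : Finset (Fin (k + 1)) → Bool) : Finset (Fin (k + 1)) → Bool :=
  fun ν => !φ νᶜ

theorem MonotoneBF.dual (hmono : MonotoneBF φ) : MonotoneBF (dualBF φ) := by
  intro ν ν' hνν' hν
  simp only [dualBF, Bool.not_eq_true'] at hν ⊢
  cases h : φ ν'ᶜ
  · rfl
  · simp [hmono _ _ (compl_subset_compl.2 hνν') h] at hν

theorem MonotoneBF.isImplicate_dualBF_iff (hmono : MonotoneBF φ) (C : Finset (Fin (k + 1))) :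
    IsImplicate (dualBF φ) C ↔ φ C = true := by
  refine ⟨fun hC => ?_, fun hC ν hν => ?_⟩
  · by_contra h
    have := hC Cᶜ (by simpa [dualBF] using h)
    rw [inter_comm, inter_compl] at this
    exact not_nonempty_empty this
  · by_contra hνC
    rw [not_nonempty_iff_eq_empty, ← disjoint_iff_inter_eq_empty,
      ← subset_compl_iff_disjoint_left] at hνC
    simp [dualBF, hmono _ _ hνC hC] at hν

theorem MonotoneBF.dnfLattice_eq_cnfLattice_dualBF (hmono : MonotoneBF φ) :
    dnfLattice φ = cnfLattice (dualBF φ) := by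
  have : ∀ C, IsPrimeImplicate (dualBF φ) C ↔ IsPrimeImplicant φ C := by
    intro C
    simp only [IsPrimeImplicate, IsPrimeImplicant, hmono.isImplicate_dualBF_iff,
      Bool.not_eq_true]
  simp only [dnfLattice, cnfLattice, this]

theorem eul_dualBF (φ : Finset (Fin (k + 1)) → Bool) : eul (dualBF φ) = (-1) ^ k * eul φ := by
  have hcompl (μ : Finset (Fin (k + 1))) : (-1 : ℤ) ^ #μᶜ = (-1) ^ (k + 1) * (-1) ^ #μ := by
    have hcard : (-1 : ℤ) ^ (#μᶜ + #μ) = (-1) ^ (k + 1) := by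
      rw [card_compl_add_card, Fintype.card_fin]
    rw [← hcard, pow_add, mul_assoc, ← mul_pow]
    norm_num
  have htotal : ∑ μ : Finset (Fin (k + 1)), (-1 : ℤ) ^ #μ = 0 := by
    rw [← powerset_univ]
    exact sum_powerset_neg_one_pow_card_of_nonempty univ_nonempty
  have hunsat : ∑ μ with φ μ = false, (-1 : ℤ) ^ #μ = -eul φ := by
    rw [eul, satSet, eq_neg_iff_add_eq_zero, add_comm, ← htotal]
    simpa using sum_filter_add_sum_filter_not univ (fun μ => φ μ = true) fun μ => (-1 : ℤ) ^ #μ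
  calc eul (dualBF φ) = ∑ μ with φ μ = false, (-1 : ℤ) ^ #μᶜ := by
        rw [eul, satSet, sum_filter, sum_filter]
        exact Fintype.sum_bijective _ compl_bijective _ _ fun ν => by simp [dualBF]
    _ = (-1) ^ k * eul φ := by
        simp only [hcompl, ← mul_sum, hunsat, pow_succ]
        ring

theorem Nondegenerate.apply_empty_and_univ (hmono : MonotoneBF φ) (hnd : Nondegenerate k φ) :
    φ ∅ = false ∧ φ univ = true := by
  obtain ⟨ν, hν⟩ := hnd 0
  have hfalse_of_univ (h : φ univ = false) (μ : Finset (Fin (k + 1))) : φ μ = false := by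
    by_contra hμ
    simp [hmono μ univ (subset_univ μ) (by simpa using hμ)] at h
  constructor
  · by_contra h
    rw [Bool.not_eq_false] at h
    exact hν (by rw [hmono _ _ (empty_subset _) h, hmono _ _ (empty_subset _) h])
  · by_contra h
    rw [Bool.not_eq_true] at h
    exact hν (by rw [hfalse_of_univ h, hfalse_of_univ h])

end BooleanFunctions

theorem stmt0_general (k : ℕ) (φ : Finset (Fin (k + 1)) → Bool)
    (hmono : MonotoneBF φ) (hnd : Nondegenerate k φ) :
    eul φ = mobiusRev (cnfLattice φ) ∅ (Finset.univ : Finset (Fin (k + 1))) ∧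
    mobiusRev (cnfLattice φ) ∅ (Finset.univ : Finset (Fin (k + 1)))
      = (-1 : ℤ) ^ k * mobiusRev (dnfLattice φ) ∅ (Finset.univ : Finset (Fin (k + 1))) := by
  obtain ⟨h₀, h₁⟩ := hnd.apply_empty_and_univ hmono
  have hcnf := hmono.eul_eq_mobiusRev_cnfLattice h₀ h₁
  have hdnf : eul (dualBF φ) = mobiusRev (dnfLattice φ) ∅ univ := by
    rw [hmono.dnfLattice_eq_cnfLattice_dualBF]
    exact hmono.dual.eul_eq_mobiusRev_cnfLattice (by simp [dualBF, h₁]) (by simp [dualBF, h₀])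
  refine ⟨hcnf, ?_⟩
  rw [← hcnf, ← hdnf, eul_dualBF, ← mul_assoc, ← mul_pow]
  norm_num

/-- for a nondegenerate monotone Boolean function `φ` on `V = {0,...,k}`,
`eul(φ) = μ_CNF(0̂, 1̂) = (-1)^k · μ_DNF(0̂, 1̂)`, where `0̂ = V` and `1̂ = ∅`. -/
theorem stmt0 (k : ℕ) (hk : 1 ≤ k) (φ : Finset (Fin (k + 1)) → Bool)
    (hmono : MonotoneBF φ) (hnd : Nondegenerate k φ) :
    eul φ = mobiusRev (cnfLattice φ) ∅ (Finset.univ : Finset (Fin (k + 1))) ∧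
    mobiusRev (cnfLattice φ) ∅ (Finset.univ : Finset (Fin (k + 1)))
      = (-1 : ℤ) ^ k * mobiusRev (dnfLattice φ) ∅ (Finset.univ : Finset (Fin (k + 1))) :=
  stmt0_general k φ hmono hnd
end

section
/- Let k ≥ 1 and let φ be a Boolean function on V = {0,...,k}. If φ is fragmentable, then eul(φ) = 0. -/
/-!
Flipping a variable on which `φ` does not depend is a fixed-point-free involution of `sat(φ)`
that reverses the sign `(-1)^|ν|`, so degenerate functions have Euler characteristic zero.
The Euler characteristic is additive on disjoint disjunctions, and since the constant function
`true` is degenerate, `eul(¬φ) = eul(true) - eul(φ) = -eul(φ)`. Hence the class of functions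
with `eul = 0` contains the degenerate ones and is closed under both constructors.
-/

open scoped Classical

/-- A Boolean function is degenerate if there is a variable on which it does not depend. -/
def Degenerate (k : ℕ) (φ : Finset (Fin (k + 1)) → Bool) : Prop :=
  ∃ l : Fin (k + 1), ∀ ν, φ ν = φ (flipV ν l)

/-- Fragmentable Boolean functions: the smallest class of Boolean functions on `V` containing
all degenerate functions and closed under negation and under disjunction of two disjoint
members of the class. -/
inductive Fragmentable (k : ℕ) : (Finset (Fin (k + 1)) → Bool) → Prop
  | degen (φ) (h : Degenerate k φ) : Fragmentable k φ
  | neg (φ) (h : Fragmentable k φ) : Fragmentable k (fun ν => !(φ ν))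
  | disj (φ ψ) (hφ : Fragmentable k φ) (hψ : Fragmentable k ψ)
      (hdisj : ∀ ν, ¬(φ ν = true ∧ ψ ν = true)) :
      Fragmentable k (fun ν => φ ν || ψ ν)

section flipV

variable {k : ℕ} (ν : Finset (Fin (k + 1))) (l : Fin (k + 1))

lemma flipV_flipV : flipV (flipV ν l) l = ν := by
  by_cases h : l ∈ ν
  · simp [flipV, h, Finset.insert_erase h]
  · simp [flipV, h, Finset.erase_insert h]

lemma flipV_ne : flipV ν l ≠ ν := by
  by_cases h : l ∈ ν <;> simp [flipV, h]

lemma neg_one_pow_card_flipV :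
    (-1 : ℤ) ^ (flipV ν l).card = -(-1 : ℤ) ^ ν.card := by
  by_cases h : l ∈ ν
  · rw [← Finset.insert_erase h, Finset.card_insert_of_notMem (ν.notMem_erase l), pow_succ]
    simp [flipV, h]
  · simp [flipV, h, Finset.card_insert_of_notMem h, pow_succ]

end flipV

section eul

variable {k : ℕ}

lemma eul_eq_zero_of_degenerate {φ : Finset (Fin (k + 1)) → Bool} (h : Degenerate k φ) :
    eul φ = 0 := by
  obtain ⟨l, hl⟩ := h
  refine Finset.sum_involution (fun ν _ => flipV ν l) (fun ν _ => ?_)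
    (fun ν _ _ => flipV_ne ν l) (fun ν hν => ?_) (fun ν _ => flipV_flipV ν l)
  · rw [neg_one_pow_card_flipV, add_neg_cancel]
  · simpa [satSet, ← hl] using hν

lemma eul_or_of_disjoint (φ ψ : Finset (Fin (k + 1)) → Bool)
    (hdisj : ∀ ν, ¬(φ ν = true ∧ ψ ν = true)) :
    eul (fun ν => φ ν || ψ ν) = eul φ + eul ψ := by
  rw [eul, eul, eul, ← Finset.sum_union]
  · congr 1
    ext ν
    simp [satSet]
  · exact Finset.disjoint_filter.2 fun ν _ hφ hψ => hdisj ν ⟨hφ, hψ⟩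

lemma eul_not (φ : Finset (Fin (k + 1)) → Bool) : eul (fun ν => !φ ν) = -eul φ := by
  have htrue : eul (fun _ : Finset (Fin (k + 1)) => true) = 0 :=
    eul_eq_zero_of_degenerate ⟨0, fun _ => rfl⟩
  have hsum := eul_or_of_disjoint φ (fun ν => !φ ν) (by simp)
  simp only [Bool.or_not_self, htrue] at hsum
  linarith

end eul

theorem stmt2_general (k : ℕ) (φ : Finset (Fin (k + 1)) → Bool)
    (h : Fragmentable k φ) : eul φ = 0 := by
  induction h with
  | degen φ h => exact eul_eq_zero_of_degenerate h
  | neg φ _ ih => rw [eul_not, ih, neg_zero]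
  | disj φ ψ _ _ hdisj ihφ ihψ => rw [eul_or_of_disjoint φ ψ hdisj, ihφ, ihψ, add_zero]

/-- if `φ` is fragmentable then `eul(φ) = 0`. -/
theorem stmt2 (k : ℕ) (hk : 1 ≤ k) (φ : Finset (Fin (k + 1)) → Bool)
    (h : Fragmentable k φ) : eul φ = 0 :=
  stmt2_general k φ h
end

section
/- Let k ≥ 1 and let φ be a Boolean function on V = {0,...,k}. If eul(φ) = 0, then φ is fragmentable. -/
/-! A Boolean function with Euler characteristic zero has as many even as odd satisfying
valuations, so its satisfying set splits into pairs `{a, b}` with `|a|` even and `|b|` odd,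
hence `|a ∆ b|` odd; fragmentable sets are closed under disjoint union, so it suffices to treat
such a pair. Two valuations differing in a single variable `l` form a function not depending
on `l`. For a larger odd distance, let `e` be two steps closer to `b` than `a` and `e, c, b` a
path of single flips: then `{a, b} = ({a, e} ∪ {c, b}) \ {e, c}`, and the difference `S \ T`
of fragmentable sets with `T ⊆ S` is the fragmentable function `¬(¬S ∨ T)`. -/

open scoped Classical

open scoped symmDiff

namespace Finset

variable {α : Type*}

theorem exists_even_card_and_exists_odd_card {S : Finset (Finset α)} (hS : S.Nonempty)
    (h : ∑ ν ∈ S, (-1 : ℤ) ^ #ν = 0) : (∃ a ∈ S, Even #a) ∧ ∃ b ∈ S, Odd #b := by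
  constructor <;> by_contra! hS'
  · rw [sum_eq_card_nsmul fun ν hν => (Nat.not_even_iff_odd.1 (hS' ν hν)).neg_one_pow] at h
    simp [hS.ne_empty] at h
  · rw [sum_eq_card_nsmul fun ν hν => (Nat.not_odd_iff_even.1 (hS' ν hν)).neg_one_pow] at h
    simp [hS.ne_empty] at h

variable [DecidableEq α]

theorem card_symmDiff_add_two_mul_card_inter (s t : Finset α) :
    #(s ∆ t) + 2 * #(s ∩ t) = #s + #t := by
  rw [symmDiff_eq_sup_sdiff_inf, sup_eq_union, inf_eq_inter,
    card_sdiff_of_subset inter_subset_union, ← card_union_add_card_inter s t]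
  have := card_le_card (inter_subset_union (s := s) (t := t))
  omega

theorem odd_card_symmDiff {s t : Finset α} (hs : Even #s) (ht : Odd #t) : Odd #(s ∆ t) := by
  have h := card_symmDiff_add_two_mul_card_inter s t
  rw [Nat.even_iff] at hs
  rw [Nat.odd_iff] at ht ⊢
  omega

theorem symmDiff_insert_of_notMem {s u : Finset α} {l : α} (hl : l ∉ u) :
    s ∆ insert l u = s ∆ u ∆ {l} := by
  rw [insert_eq, ← sup_eq_union, ← (disjoint_singleton_left.2 hl).symmDiff_eq_sup,
    symmDiff_comm {l} u, symmDiff_assoc]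

end Finset

open Finset

theorem flipV_eq_symmDiff {k : ℕ} (ν : Finset (Fin (k + 1))) (l : Fin (k + 1)) :
    flipV ν l = ν ∆ {l} := by
  unfold flipV
  split_ifs with h
  · rw [symmDiff_of_ge (singleton_subset_iff.2 h), erase_eq]
  · rw [(disjoint_singleton_right.2 h).symmDiff_eq_sup, sup_eq_union, insert_eq, union_comm]

def FragmentableSet (k : ℕ) (S : Finset (Finset (Fin (k + 1)))) : Prop :=
  Fragmentable k (· ∈ S)

namespace FragmentableSet

variable {k : ℕ} {S T : Finset (Finset (Fin (k + 1)))}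

theorem empty : FragmentableSet k ∅ :=
  .degen _ ⟨0, fun _ => rfl⟩

theorem pair_symmDiff_singleton (a : Finset (Fin (k + 1))) (l : Fin (k + 1)) :
    FragmentableSet k {a, a ∆ {l}} := by
  refine .degen _ ⟨l, fun ν => ?_⟩
  have hflip : ν ∆ {l} = a ↔ ν = a ∆ {l} := (symmDiff_left_involutive _).eq_iff
  simp only [flipV_eq_symmDiff, mem_insert, mem_singleton, symmDiff_left_inj, hflip]
  grind

theorem union (hST : Disjoint S T) (hS : FragmentableSet k S) (hT : FragmentableSet k T) :
    FragmentableSet k (S ∪ T) := by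
  have := Fragmentable.disj _ _ hS hT fun ν h =>
    disjoint_left.1 hST (by simpa using h.1) (by simpa using h.2)
  unfold FragmentableSet
  convert this using 2
  simp

theorem compl (hS : FragmentableSet k S) : FragmentableSet k Sᶜ := by
  have := Fragmentable.neg _ hS
  unfold FragmentableSet
  convert this using 2
  simp

theorem sdiff (hTS : T ⊆ S) (hS : FragmentableSet k S) (hT : FragmentableSet k T) :
    FragmentableSet k (S \ T) := by
  have := (hS.compl.union (disjoint_compl_left.mono_right hTS) hT).compl
  rwa [compl_union, compl_compl, ← sdiff_eq_inter_compl] at this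

theorem pair_of_path {a e c b : Finset (Fin (k + 1))} (hae : FragmentableSet k {a, e})
    (hec : FragmentableSet k {e, c}) (hcb : FragmentableSet k {c, b})
    (hnodup : [a, e, c, b].Nodup) : FragmentableSet k {a, b} := by
  simp only [List.nodup_cons, List.mem_cons, List.not_mem_nil, or_false, List.nodup_nil,
    and_true] at hnodup
  have hdisj : Disjoint ({a, e} : Finset _) {c, b} := by
    simp only [disjoint_insert_left, disjoint_insert_right, disjoint_singleton, mem_insert,
      mem_singleton]
    tauto
  have hsub : ({e, c} : Finset _) ⊆ {a, e} ∪ {c, b} := by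
    intro x; simp only [mem_insert, mem_singleton, mem_union]; tauto
  convert (hae.union hdisj hcb).sdiff hsub hec using 1
  ext x
  simp only [mem_insert, mem_singleton, mem_union, mem_sdiff]
  grind

theorem pair_symmDiff_of_odd (a : Finset (Fin (k + 1))) {t : Finset (Fin (k + 1))}
    (ht : Odd #t) : FragmentableSet k {a, a ∆ t} := by
  obtain ⟨n, hn⟩ := ht
  induction n generalizing t with
  | zero =>
    obtain ⟨l, rfl⟩ := card_eq_one.1 hn
    exact pair_symmDiff_singleton a l
  | succ n ih =>
    obtain ⟨l, s, hl, rfl, hs⟩ := card_eq_succ.1 hn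
    obtain ⟨l', u, hl', rfl, hu⟩ := card_eq_succ.1 (by omega : #s = 2 * n + 1 + 1)
    refine pair_of_path (c := a ∆ insert l' u) (ih hu) ?_ ?_ ?_
    · rw [symmDiff_insert_of_notMem hl']
      exact pair_symmDiff_singleton _ _
    · rw [symmDiff_insert_of_notMem hl]
      exact pair_symmDiff_singleton _ _
    · have hcards :
          [#(∅ : Finset (Fin (k + 1))), #u, #(insert l' u), #(insert l (insert l' u))].Nodup := by
        rw [card_insert_of_notMem hl, card_insert_of_notMem hl', hu]
        simp
      have := (List.Nodup.of_map card (l := [∅, u, insert l' u, insert l (insert l' u)])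
        hcards).map (symmDiff_right_injective a)
      convert this using 1
      simpa using (symmDiff_bot a).symm

theorem pair_of_even_of_odd {a b : Finset (Fin (k + 1))} (ha : Even #a) (hb : Odd #b) :
    FragmentableSet k {a, b} := by
  simpa using pair_symmDiff_of_odd a (odd_card_symmDiff ha hb)

theorem of_sum_neg_one_pow_card_eq_zero {S : Finset (Finset (Fin (k + 1)))}
    (h : ∑ ν ∈ S, (-1 : ℤ) ^ #ν = 0) : FragmentableSet k S := by
  induction S using Finset.strongInduction with
  | H S ih =>
  obtain rfl | hS := S.eq_empty_or_nonempty
  · exact empty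
  obtain ⟨⟨a, haS, ha⟩, b, hbS, hb⟩ := exists_even_card_and_exists_odd_card hS h
  have hab : a ≠ b := by
    rintro rfl
    exact Nat.not_even_iff_odd.2 hb ha
  have hpair : {a, b} ⊆ S := insert_subset haS (singleton_subset_iff.2 hbS)
  have hrest : ∑ ν ∈ S \ {a, b}, (-1 : ℤ) ^ #ν = 0 := by
    rw [sum_sdiff_eq_sub hpair, h, sum_pair hab, ha.neg_one_pow, hb.neg_one_pow]
    norm_num
  have := (ih _ (sdiff_ssubset hpair (insert_nonempty a {b})) hrest).union
    sdiff_disjoint (pair_of_even_of_odd ha hb)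
  rwa [sdiff_union_of_subset hpair] at this

end FragmentableSet

theorem stmt3_general (k : ℕ) (φ : Finset (Fin (k + 1)) → Bool)
    (h : eul φ = 0) : Fragmentable k φ := by
  simpa [FragmentableSet, satSet] using
    FragmentableSet.of_sum_neg_one_pow_card_eq_zero (S := satSet φ) h

/-- if `eul(φ) = 0` then `φ` is fragmentable. -/
theorem stmt3 (k : ℕ) (hk : 1 ≤ k) (φ : Finset (Fin (k + 1)) → Bool)
    (h : eul φ = 0) : Fragmentable k φ :=
  stmt3_general k φ h
end

section
/- Let k ≥ 1 and let φ be a Boolean function on V = {0,...,k} (not necessarily monotone) with eul(φ) ≠ 0 and such that min{eul(ψ) : ψ a monotone Boolean function on V} ≤ eul(φ) ≤ max{eul(ψ) : ψ a monotone Boolean function on V}. Then there exists a monotone Boolean function φ_mon on V with eul(φ_mon) = eul(φ). -/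
/-!
Removing from a monotone Boolean function a minimal satisfying valuation `ν` keeps it monotone
and changes its Euler characteristic by `±1`. Repeating this down to the constantly false
function, whose Euler characteristic is `0`, the Euler characteristics of monotone functions
pass through every integer between `0` and that of the starting function. Hence they form an
integer interval containing `0`, the set of all integers between its minimum and maximum.
-/

open scoped Classical

section

variable {k : ℕ}

lemma mem_satSet {ψ : Finset (Fin (k + 1)) → Bool} {ν : Finset (Fin (k + 1))} :
    ν ∈ satSet ψ ↔ ψ ν = true := by
  simp [satSet]

lemma eul_eq_zero_of_satSet_eq_empty {ψ : Finset (Fin (k + 1)) → Bool} (h : satSet ψ = ∅) :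
    eul ψ = 0 := by
  simp [eul, h]

lemma monotoneBF_const_false : MonotoneBF (fun _ : Finset (Fin (k + 1)) => false) :=
  fun _ _ _ h => h

def eraseVal (ψ : Finset (Fin (k + 1)) → Bool) (ν : Finset (Fin (k + 1))) :
    Finset (Fin (k + 1)) → Bool :=
  fun μ => ψ μ && decide (μ ≠ ν)

lemma satSet_eraseVal (ψ : Finset (Fin (k + 1)) → Bool) (ν : Finset (Fin (k + 1))) :
    satSet (eraseVal ψ ν) = (satSet ψ).erase ν := by
  ext μ
  simp [mem_satSet, eraseVal, and_comm]

lemma eul_eraseVal {ψ : Finset (Fin (k + 1)) → Bool} {ν : Finset (Fin (k + 1))}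
    (hν : ν ∈ satSet ψ) : eul (eraseVal ψ ν) = eul ψ - (-1) ^ ν.card := by
  rw [eul, satSet_eraseVal, Finset.sum_erase_eq_sub hν, eul]

lemma MonotoneBF.eraseVal {ψ : Finset (Fin (k + 1)) → Bool} (hψ : MonotoneBF ψ)
    {ν : Finset (Fin (k + 1))} (hmin : ∀ μ ⊂ ν, ψ μ = false) :
    MonotoneBF (eraseVal ψ ν) := by
  intro μ μ' hμμ' hμ
  simp only [_root_.eraseVal, Bool.and_eq_true, decide_eq_true_eq] at hμ ⊢
  obtain ⟨hψμ, hμν⟩ := hμ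
  refine ⟨hψ μ μ' hμμ' hψμ, ?_⟩
  rintro rfl
  have := hmin μ (Finset.ssubset_iff_subset_ne.mpr ⟨hμμ', hμν⟩)
  simp_all

lemma exists_minimal_mem_satSet {ψ : Finset (Fin (k + 1)) → Bool} (h : (satSet ψ).Nonempty) :
    ∃ ν ∈ satSet ψ, ∀ μ ⊂ ν, ψ μ = false := by
  obtain ⟨ν, hν, hmin⟩ := Finset.exists_min_image (satSet ψ) Finset.card h
  refine ⟨ν, hν, fun μ hμν => ?_⟩
  by_contra hμ
  exact (hmin μ (mem_satSet.mpr (by simpa using hμ))).not_gt (Finset.card_lt_card hμν)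

theorem MonotoneBF.exists_eul_eq_of_mem_uIcc {ψ : Finset (Fin (k + 1)) → Bool}
    (hψ : MonotoneBF ψ) {m : ℤ} (hm : m ∈ Set.uIcc 0 (eul ψ)) :
    ∃ χ : Finset (Fin (k + 1)) → Bool, MonotoneBF χ ∧ eul χ = m := by
  induction hn : (satSet ψ).card generalizing ψ with
  | zero =>
    rw [eul_eq_zero_of_satSet_eq_empty (Finset.card_eq_zero.mp hn), Set.uIcc_self] at hm
    exact ⟨ψ, hψ, by rw [eul_eq_zero_of_satSet_eq_empty (Finset.card_eq_zero.mp hn), hm]⟩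
  | succ n ih =>
    by_cases hme : eul ψ = m
    · exact ⟨ψ, hψ, hme⟩
    obtain ⟨ν, hν, hmin⟩ := exists_minimal_mem_satSet (ψ := ψ) (Finset.card_pos.mp (by omega))
    refine ih (hψ.eraseVal hmin) ?_ ?_
    · have hstep : (-1 : ℤ) ^ ν.card = 1 ∨ (-1 : ℤ) ^ ν.card = -1 :=
        (Nat.even_or_odd ν.card).imp Even.neg_one_pow Odd.neg_one_pow
      rw [Set.mem_uIcc] at hm ⊢
      rw [eul_eraseVal hν]
      rcases hstep with h | h <;> rw [h] <;> omega
    · rw [satSet_eraseVal, Finset.card_erase_of_mem hν, hn, Nat.add_sub_cancel]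

lemma finite_setOf_eul_monotoneBF :
    {x : ℤ | ∃ ψ : Finset (Fin (k + 1)) → Bool, MonotoneBF ψ ∧ eul ψ = x}.Finite :=
  (Set.finite_range eul).subset (by rintro _ ⟨ψ, -, rfl⟩; exact ⟨ψ, rfl⟩)

end

theorem stmt15_general (k : ℕ) (φ : Finset (Fin (k + 1)) → Bool)
    (hlo : sInf {x : ℤ | ∃ ψ : Finset (Fin (k + 1)) → Bool, MonotoneBF ψ ∧ eul ψ = x}
        ≤ eul φ)
    (hhi : eul φ ≤
      sSup {x : ℤ | ∃ ψ : Finset (Fin (k + 1)) → Bool, MonotoneBF ψ ∧ eul ψ = x}) :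
    ∃ φmon : Finset (Fin (k + 1)) → Bool, MonotoneBF φmon ∧ eul φmon = eul φ := by
  have hzero : (0 : ℤ) ∈ {x : ℤ | ∃ ψ : Finset (Fin (k + 1)) → Bool, MonotoneBF ψ ∧ eul ψ = x} :=
    ⟨_, monotoneBF_const_false, eul_eq_zero_of_satSet_eq_empty (by simp [satSet])⟩
  obtain ⟨ψmin, hψmin, hmin⟩ := Set.Nonempty.csInf_mem ⟨0, hzero⟩ finite_setOf_eul_monotoneBF
  obtain ⟨ψmax, hψmax, hmax⟩ := Set.Nonempty.csSup_mem ⟨0, hzero⟩ finite_setOf_eul_monotoneBF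
  rcases le_or_gt 0 (eul φ) with h | h
  · exact hψmax.exists_eul_eq_of_mem_uIcc (Set.mem_uIcc.mpr (.inl ⟨h, hmax ▸ hhi⟩))
  · exact hψmin.exists_eul_eq_of_mem_uIcc (Set.mem_uIcc.mpr (.inr ⟨hmin ▸ hlo, h.le⟩))

/-- if `eul(φ) ≠ 0` and `eul(φ)` lies between the minimum and the maximum of
the Euler characteristics of monotone Boolean functions on `V`, then some monotone Boolean
function `φ_mon` on `V` has `eul(φ_mon) = eul(φ)`. -/
theorem stmt15 (k : ℕ) (hk : 1 ≤ k) (φ : Finset (Fin (k + 1)) → Bool)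
    (hne : eul φ ≠ 0)
    (hlo : sInf {x : ℤ | ∃ ψ : Finset (Fin (k + 1)) → Bool, MonotoneBF ψ ∧ eul ψ = x}
        ≤ eul φ)
    (hhi : eul φ ≤
      sSup {x : ℤ | ∃ ψ : Finset (Fin (k + 1)) → Bool, MonotoneBF ψ ∧ eul ψ = x}) :
    ∃ φmon : Finset (Fin (k + 1)) → Bool, MonotoneBF φmon ∧ eul φmon = eul φ :=
  stmt15_general k φ hlo hhi
end

section
/- Let k ≥ 1 and V = {0,...,k}. The number of Boolean functions φ on V with eul(φ) = 0 equals Σ_{j=0}^{2^k} C(2^k, j)^2, where C denotes the binomial coefficient. -/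
open scoped Classical

/-!
Let `O` be the set of valuations of odd size. Counting the satisfying valuations of `φ` by
parity gives `eul φ = |sat φ ∆ O| - |O|`, and `|O| = 2^k`. Hence `φ ↦ sat φ ∆ O` is a bijection
from the Boolean functions with `eul φ = 0` onto the `2^k`-element sets of valuations, of which
there are `C(2^(k+1), 2^k) = Σ_j C(2^k, j)^2` by Vandermonde's identity.
-/

open Finset
open scoped symmDiff

theorem Finset.card_symmDiff {α : Type*} [DecidableEq α] (s t : Finset α) :
    #(s ∆ t) = #(s \ t) + #(t \ s) := by
  rw [symmDiff_def, sup_eq_union, card_union_of_disjoint disjoint_sdiff_sdiff]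

theorem sum_neg_one_pow_eq_card_symmDiff_sub {α : Type*} [Fintype α] [DecidableEq α]
    (f : α → ℕ) (s : Finset α) :
    ∑ a ∈ s, (-1 : ℤ) ^ f a = #(s ∆ univ.filter (Odd ∘ f)) - #(univ.filter (Odd ∘ f)) := by
  set t := univ.filter (Odd ∘ f)
  have hmem (a : α) : a ∈ t ↔ Odd (f a) := by simp [t]
  have hsum : ∑ a ∈ s, (-1 : ℤ) ^ f a = #(s \ t) - #(s ∩ t) := by
    rw [← sum_filter_not_add_sum_filter s (· ∈ t), filter_notMem_eq_sdiff, filter_mem_eq_inter,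
      sum_congr rfl fun a ha => Even.neg_one_pow <| Nat.not_odd_iff_even.mp <|
        (hmem a).not.mp (mem_sdiff.mp ha).2,
      sum_congr rfl fun a ha => Odd.neg_one_pow <| (hmem a).mp (mem_inter.mp ha).2]
    simp [sub_eq_add_neg]
  rw [hsum, card_symmDiff, card_sdiff (t := t) (s := s)]
  push_cast [card_le_card inter_subset_right]
  ring

theorem two_mul_card_filter_odd_card (β : Type*) [Fintype β] [DecidableEq β] [Nonempty β] :
    2 * #(univ.filter (Odd ∘ card : Finset β → Prop)) = 2 ^ Fintype.card β := by
  have h := sum_neg_one_pow_eq_card_symmDiff_sub (card : Finset β → ℕ) univ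
  set odd := univ.filter (Odd ∘ card : Finset β → Prop)
  rw [← powerset_univ, sum_powerset_neg_one_pow_card_of_nonempty univ_nonempty, powerset_univ,
    show univ ∆ odd = oddᶜ from top_symmDiff odd, card_compl, Fintype.card_finset] at h
  have := card_le_univ odd
  rw [Fintype.card_finset] at this
  omega

theorem card_filter_card_symmDiff_eq {α : Type*} [Fintype α] [DecidableEq α]
    (t : Finset α) (n : ℕ) :
    #{φ : α → Bool | #(univ.filter (φ · = true) ∆ t) = n} = (Fintype.card α).choose n := by
  rw [← card_univ, ← card_powersetCard]
  refine card_nbij' (fun φ => univ.filter (φ · = true) ∆ t) (fun S a => decide (a ∈ S ∆ t))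
    ?_ ?_ ?_ ?_
  · intro φ hφ
    simpa using hφ
  · intro S hS
    simpa [symmDiff_symmDiff_cancel_right] using hS
  · intro φ _
    funext a
    simp
  · intro S _
    simp [symmDiff_symmDiff_cancel_right]

theorem stmt16_general (k : ℕ) :
    (Finset.univ.filter
        (fun φ : Finset (Fin (k + 1)) → Bool => eul φ = 0)).card
      = ∑ j ∈ Finset.range (2 ^ k + 1), (Nat.choose (2 ^ k) j) ^ 2 := by
  have hodd : #(univ.filter (Odd ∘ card : Finset (Fin (k + 1)) → Prop)) = 2 ^ k :=
    Nat.eq_of_mul_eq_mul_left two_pos <| by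
      rw [two_mul_card_filter_odd_card, Fintype.card_fin, pow_succ']
  have heul (φ : Finset (Fin (k + 1)) → Bool) :
      eul φ = 0 ↔ #(satSet φ ∆ univ.filter (Odd ∘ card)) = 2 ^ k := by
    rw [eul, sum_neg_one_pow_eq_card_symmDiff_sub, hodd, sub_eq_zero]
    norm_cast
  rw [filter_congr fun φ _ => heul φ]
  unfold satSet
  rw [card_filter_card_symmDiff_eq, Fintype.card_finset, Fintype.card_fin, pow_succ',
    Nat.sum_range_choose_sq]

/-- the number of Boolean functions `φ` on `V = {0,...,k}` with `eul(φ) = 0`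
equals `Σ_{j=0}^{2^k} C(2^k, j)^2`. -/
theorem stmt16 (k : ℕ) (hk : 1 ≤ k) :
    (Finset.univ.filter
        (fun φ : Finset (Fin (k + 1)) → Bool => eul φ = 0)).card
      = ∑ j ∈ Finset.range (2 ^ k + 1), (Nat.choose (2 ^ k) j) ^ 2 :=
  stmt16_general k
end
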